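/- Suppose L = L(Γ) is the line graph of a finite connected simple graph Γ, and L is not isomorphic to F₁, F₂, or F₃. Then for any gain function ζ on L, the gain graph (L,ζ) is a gain-line graph (with parameter s) if and only if every odd triangle of L has gain s. -/

import Mathlib

open SimpleGraph

/-- `ψ` is a gain function on `Γ`: on adjacent ordered pairs, reversing the
orientation inverts the gain. -/
def IsGainFun {V G : Type} [Group G] (Γ : SimpleGraph V) (ψ : V → V → G) : Prop :=
  ∀ ⦃u v : V⦄, Γ.Adj u v → ψ v u = (ψ u v)⁻¹

/-- Two gain functions on `Γ` are switching equivalent. -/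
def SwitchingEquiv {V G : Type} [Group G] (Γ : SimpleGraph V) (ψ₁ ψ₂ : V → V → G) : Prop :=
  ∃ f : V → G, ∀ ⦃u v : V⦄, Γ.Adj u v → ψ₂ u v = (f u)⁻¹ * ψ₁ u v * f v

/-- A `G`-phase of `Γ`: a choice of a group element for every incident
(vertex, edge) pair (the non-incident entries of the phase matrix are `0`,
so they carry no data). -/
def GPhase {V : Type} (Γ : SimpleGraph V) (G : Type) : Type :=
  ∀ (v : V) (e : Γ.edgeSet), v ∈ (e : Sym2 V) → G

/-- `Ψ(H) = ψ`: the gain function associated with the phase `H` (with parameter `s₁`)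
is `ψ`, i.e. `ψ(u,v) = s₁ · H(u,e) · H(v,e)⁻¹` for `e = {u,v}`. -/
def PsiEq {V G : Type} [Group G] {Γ : SimpleGraph V} (s₁ : G) (H : GPhase Γ G)
    (ψ : V → V → G) : Prop :=
  ∀ ⦃u v : V⦄ (h : Γ.Adj u v),
    ψ u v = s₁ * H u ⟨s(u, v), h⟩ (Sym2.mem_mk_left u v)
      * (H v ⟨s(u, v), h⟩ (Sym2.mem_mk_right u v))⁻¹

/-- `Ψ_L(H) = ζ`: the gain function on the line graph associated with the phase `H`
(with parameter `s`) is `ζ`, i.e. `ζ(e_p,e_q) = s · H(w,e_p)⁻¹ · H(w,e_q)` whenever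
`w` is a common endpoint of the distinct edges `e_p, e_q`. -/
def PsiLEq {V G : Type} [Group G] {Γ : SimpleGraph V} (s : G) (H : GPhase Γ G)
    (ζ : Γ.edgeSet → Γ.edgeSet → G) : Prop :=
  ∀ (p q : Γ.edgeSet) (w : V) (hp : w ∈ (p : Sym2 V)) (hq : w ∈ (q : Sym2 V)), p ≠ q →
    ζ p q = s * (H w p hp)⁻¹ * H w q hq

/-- `(L, ζ)` is a gain-line graph (with parameter `s`): there are a graph `Γ`
with `L = L(Γ)` (up to isomorphism) and a `G`-phase `H` of `Γ` with `Ψ_L(H) = ζ`. -/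
def IsGainLine {VL G : Type} [Group G] (s : G) (L : SimpleGraph VL) (ζ : VL → VL → G) : Prop :=
  ∃ (V' : Type) (Γ : SimpleGraph V') (φ : L ≃g Γ.lineGraph) (H : GPhase Γ G),
    PsiLEq s H fun p q => ζ (φ.symm p) (φ.symm q)
/-- Three vertices forming a triangle of `L`. -/
def IsTriangle {V : Type} (L : SimpleGraph V) (a b c : V) : Prop :=
  L.Adj a b ∧ L.Adj b c ∧ L.Adj a c

/-- An odd triangle: some vertex `w` is adjacent to an odd number of its vertices. -/
def OddTriangle {V : Type} (L : SimpleGraph V) (a b c : V) : Prop :=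
  IsTriangle L a b c ∧ ∃ w : V, Odd ({x ∈ ({a, b, c} : Set V) | L.Adj x w}.ncard)

/-- An even triangle: every vertex `w` is adjacent to an even number of its vertices. -/
def EvenTriangle {V : Type} (L : SimpleGraph V) (a b c : V) : Prop :=
  IsTriangle L a b c ∧ ∀ w : V, Even ({x ∈ ({a, b, c} : Set V) | L.Adj x w}.ncard)
/-- The exceptional graph `F₁`: the diamond graph (`K₄` minus one edge). -/
def diamondGraph : SimpleGraph (Fin 4) :=
  SimpleGraph.fromRel (fun u v =>
    (u = 0 ∧ v = 1) ∨ (u = 1 ∧ v = 2) ∨ (u = 0 ∧ v = 2) ∨ (u = 1 ∧ v = 3) ∨ (u = 0 ∧ v = 3))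

/-- The exceptional graph `F₂`: the 4-wheel, a 4-cycle `0 1 2 3` plus the hub `4`. -/
def wheel4 : SimpleGraph (Fin 5) :=
  SimpleGraph.fromRel (fun u v =>
    (u = 0 ∧ v = 1) ∨ (u = 1 ∧ v = 2) ∨ (u = 2 ∧ v = 3) ∨ (u = 0 ∧ v = 3) ∨
    (u = 4 ∧ (v = 0 ∨ v = 1 ∨ v = 2 ∨ v = 3)))

/-- The exceptional graph `F₃`: the octahedron `K_{2,2,2}`. -/
def octahedron : SimpleGraph (Fin 3 × Fin 2) where
  Adj u v := u.1 ≠ v.1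
  symm := ⟨fun _ _ h => h.symm⟩
  loopless := ⟨fun _ h => h rfl⟩

/-! A triangle of a line graph `L(Γ)` is either a star (three edges through one vertex) or the
edge set of a triangle of `Γ`, and the latter is always even: an edge of `Γ` meets none or two
of its edges. So when `ζ = Ψ_L(H)`, an odd triangle is a star at some `w`, and its gain
telescopes to `s³ = s`. Conversely, if every star has gain `s`, choosing an edge `e₀` at each
vertex `w` and putting `H(w, e₀) = 1`, `H(w, e) = s ζ(e₀, e)` gives a phase. Otherwise some
star has gain `≠ s`, so it is even, and since `Γ` is connected this forces `Γ` to be `K_{1,3}`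
plus some edges between its leaves. Their line graphs are `F₁`, `F₂`, `F₃` and `K₃`; in the
last case `L(Γ) ≅ L(K₃)`, and any gain on `L(K₃)` comes from a phase, since no vertex of `K₃`
lies on three edges. -/

section CentralInvolution

variable {G : Type} [Group G] {s : G}

lemma mul_inv_mul_cyclic_eq (hs : s * s = 1) (hsc : ∀ g : G, s * g = g * s) (x y z : G) :
    s * x⁻¹ * y * (s * y⁻¹ * z) * (s * z⁻¹ * x) = s := by
  have hshift : ∀ g h : G, g * (s * h) = s * (g * h) := fun g h => by
    rw [← mul_assoc, ← hsc, mul_assoc]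
  simp only [mul_assoc, hshift]
  rw [← mul_assoc s s, hs, one_mul]
  group

lemma exists_potential_of_triangle_gain {X : Type} (hs : s * s = 1)
    (hsc : ∀ g : G, s * g = g * s) (ζ : X → X → G) (hinv : ∀ p q, p ≠ q → ζ q p = (ζ p q)⁻¹)
    (htri : ∀ p q r, p ≠ q → q ≠ r → p ≠ r → ζ p q * ζ q r * ζ r p = s) :
    ∃ h : X → G, ∀ p q, p ≠ q → ζ p q = s * (h p)⁻¹ * h q := by
  classical
  rcases isEmpty_or_nonempty X with hX | ⟨⟨x₀⟩⟩
  · exact ⟨1, fun p => isEmptyElim p⟩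
  have hss : ∀ g : G, s * (s * g) = g := fun g => by rw [← mul_assoc, hs, one_mul]
  have hcancel : ∀ g : G, s * (s * g)⁻¹ = g⁻¹ := fun g => by
    rw [mul_inv_rev, ← mul_assoc, hsc, mul_assoc, mul_inv_cancel, mul_one]
  refine ⟨fun x => if x = x₀ then 1 else s * ζ x₀ x, fun p q hpq => ?_⟩
  dsimp only
  by_cases hp : p = x₀ <;> by_cases hq : q = x₀
  · exact absurd (hp.trans hq.symm) hpq
  · subst hp
    rw [if_pos rfl, if_neg hq, inv_one, mul_one, hss]
  · subst hq
    rw [if_neg hp, if_pos rfl, mul_one, hcancel, hinv _ _ (Ne.symm hp)]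
  · have htri' : ζ p x₀ * ζ x₀ q = s * ζ p q := by
      rw [← mul_inv_eq_iff_eq_mul, ← hinv p q hpq]
      exact htri p x₀ q hp (Ne.symm hq) hpq
    rw [if_neg hp, if_neg hq, ← mul_assoc, hcancel, ← hinv _ _ (Ne.symm hp), ← hsc,
      mul_assoc, htri', hss]

end CentralInvolution

lemma Set.ncard_sep_triple {α : Type} {a b c : α} (hab : a ≠ b) (hac : a ≠ c) (hbc : b ≠ c)
    (P : α → Prop) [DecidablePred P] :
    {x ∈ ({a, b, c} : Set α) | P x}.ncard =
      (if P a then 1 else 0) + (if P b then 1 else 0) + (if P c then 1 else 0) := by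
  classical
  have : {x ∈ ({a, b, c} : Set α) | P x} = ↑(({a, b, c} : Finset α).filter P) := by
    ext; simp
  rw [this, Set.ncard_coe_finset, Finset.card_filter, Finset.sum_insert (by simp [hab, hac]),
    Finset.sum_pair hbc, add_assoc]

section Triangles

variable {α β : Type} {L : SimpleGraph α} {a b c : α}

lemma IsTriangle.evenTriangle_of_not_oddTriangle (hT : IsTriangle L a b c)
    (h : ¬ OddTriangle L a b c) : EvenTriangle L a b c :=
  ⟨hT, fun w => Nat.not_odd_iff_even.mp fun hw => h ⟨hT, w, hw⟩⟩

lemma EvenTriangle.swap (h : EvenTriangle L a b c) : EvenTriangle L b a c :=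
  ⟨⟨h.1.1.symm, h.1.2.2, h.1.2.1⟩, by rw [Set.insert_comm]; exact h.2⟩

lemma EvenTriangle.rotate (h : EvenTriangle L a b c) : EvenTriangle L c a b :=
  ⟨⟨h.1.2.2.symm, h.1.1, h.1.2.1.symm⟩, by rw [Set.insert_comm, Set.pair_comm]; exact h.2⟩

lemma OddTriangle.map {L' : SimpleGraph β} (φ : L ≃g L') (h : OddTriangle L a b c) :
    OddTriangle L' (φ a) (φ b) (φ c) := by
  obtain ⟨⟨hab, hbc, hac⟩, w, hw⟩ := h
  refine ⟨⟨φ.map_adj_iff.mpr hab, φ.map_adj_iff.mpr hbc, φ.map_adj_iff.mpr hac⟩, φ w, ?_⟩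
  have : {x ∈ ({φ a, φ b, φ c} : Set β) | L'.Adj x (φ w)} =
      φ '' {x ∈ ({a, b, c} : Set α) | L.Adj x w} := by
    ext y
    obtain ⟨x, rfl⟩ := φ.surjective y
    simp [φ.injective.eq_iff, φ.map_adj_iff]
  rwa [this, Set.ncard_image_of_injective _ φ.injective]

end Triangles

namespace SimpleGraph

lemma nonempty_iso_of_bijective {α β : Type} {A : SimpleGraph α} {B : SimpleGraph β}
    (f : β → α) (hf : Function.Bijective f) (hadj : ∀ i j, A.Adj (f i) (f j) ↔ B.Adj i j) :
    Nonempty (A ≃g B) :=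
  ⟨(⟨Equiv.ofBijective f hf, hadj _ _⟩ : B ≃g A).symm⟩

instance {V : Type} [Fintype V] [DecidableEq V] (Γ : SimpleGraph V) :
    DecidableRel Γ.lineGraph.Adj :=
  fun _ _ => decidable_of_iff' _ lineGraph_adj_iff_exists

variable {V : Type} {Γ : SimpleGraph V}

lemma Preconnected.mem_of_adj_closed (h : Γ.Preconnected) {S : Set V}
    (hS : ∀ x y, x ∈ S → Γ.Adj x y → y ∈ S) {x : V} (hx : x ∈ S) (y : V) : y ∈ S := by
  induction (reachable_iff_reflTransGen x y).mp (h x y) with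
  | refl => exact hx
  | tail _ hyz ih => exact hS _ _ ih hyz

lemma lineGraph_adj_of_mem {w : V} {p q : Γ.edgeSet} (hp : w ∈ (p : Sym2 V))
    (hq : w ∈ (q : Sym2 V)) (hpq : p ≠ q) : Γ.lineGraph.Adj p q :=
  lineGraph_adj_iff_exists.mpr ⟨hpq, w, hp, hq⟩

lemma exists_adj_eq_of_mem {w : V} {p : Γ.edgeSet} (hp : w ∈ (p : Sym2 V)) :
    ∃ a, ∃ h : Γ.Adj w a, p = ⟨s(w, a), h⟩ := by
  obtain ⟨a, ha⟩ := Sym2.mem_iff_exists.mp hp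
  exact ⟨a, by rw [← mem_edgeSet, ← ha]; exact p.2, Subtype.ext ha⟩

lemma lineGraph_adj_iff_xor {x f : Γ.edgeSet} {u t : V} (hx : (x : Sym2 V) = s(u, t)) :
    Γ.lineGraph.Adj x f ↔ Xor (u ∈ (f : Sym2 V)) (t ∈ (f : Sym2 V)) := by
  have hut : u ≠ t := Γ.ne_of_adj (by rw [← mem_edgeSet, ← hx]; exact x.2)
  rw [lineGraph_adj_iff_exists, xor_iff_or_and_not_and, Sym2.mem_and_mem_iff hut, ← hx, Ne,
    Subtype.ext_iff, eq_comm, hx]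
  simp only [Sym2.mem_iff, exists_eq_or_imp, exists_eq_left]
  tauto

lemma lineGraph_adj_mk_iff_xor {u t : V} (h : Γ.Adj u t) {f : Γ.edgeSet} :
    Γ.lineGraph.Adj ⟨s(u, t), h⟩ f ↔ Xor (u ∈ (f : Sym2 V)) (t ∈ (f : Sym2 V)) :=
  lineGraph_adj_iff_xor rfl

lemma exists_mem_of_oddTriangle_lineGraph {p q r : Γ.edgeSet}
    (h : OddTriangle Γ.lineGraph p q r) :
    ∃ w, w ∈ (p : Sym2 V) ∧ w ∈ (q : Sym2 V) ∧ w ∈ (r : Sym2 V) := by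
  classical
  obtain ⟨⟨hpq, hqr, hpr⟩, f, hodd⟩ := h
  obtain ⟨-, u, hup, huq⟩ := lineGraph_adj_iff_exists.mp hpq
  obtain ⟨-, v, hvq, hvr⟩ := lineGraph_adj_iff_exists.mp hqr
  obtain ⟨-, t, htp, htr⟩ := lineGraph_adj_iff_exists.mp hpr
  by_contra! hcom
  have huv : u ≠ v := by rintro rfl; exact hcom u hup huq hvr
  have hut : u ≠ t := by rintro rfl; exact hcom u hup huq htr
  have hvt : v ≠ t := by rintro rfl; exact hcom v htp hvq htr
  -- `p, q, r` are `ut, uv, vt`, and an edge is adjacent to `xy` iff it contains exactly one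
  -- of `x, y`: the three indicators below always sum to an even number.
  simp only [Set.ncard_sep_triple hpq.ne hpr.ne hqr.ne,
    lineGraph_adj_iff_xor ((Sym2.mem_and_mem_iff hut).mp ⟨hup, htp⟩),
    lineGraph_adj_iff_xor ((Sym2.mem_and_mem_iff huv).mp ⟨huq, hvq⟩),
    lineGraph_adj_iff_xor ((Sym2.mem_and_mem_iff hvt).mp ⟨hvr, htr⟩)] at hodd
  revert hodd
  by_cases u ∈ (f : Sym2 V) <;> by_cases v ∈ (f : Sym2 V) <;> by_cases t ∈ (f : Sym2 V) <;>
    simp [*]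

end SimpleGraph

section EvenStar

variable {V : Type} {Γ : SimpleGraph V} {w a b c : V} {ha : Γ.Adj w a} {hb : Γ.Adj w b} {hc : Γ.Adj w c}

lemma EvenTriangle.eq_of_adj_center
    (hev : EvenTriangle Γ.lineGraph ⟨s(w, a), ha⟩ ⟨s(w, b), hb⟩ ⟨s(w, c), hc⟩) {y : V}
    (hy : Γ.Adj w y) : y = a ∨ y = b ∨ y = c := by
  classical
  by_contra! hne
  -- `wy` would meet all three edges of the star
  have := hev.2 ⟨s(w, y), hy⟩
  simp only [Set.ncard_sep_triple hev.1.1.ne hev.1.2.2.ne hev.1.2.1.ne,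
    lineGraph_adj_mk_iff_xor] at this
  simp [Sym2.mem_iff, Nat.even_iff, ha.ne', hb.ne', hc.ne', hne.1.symm, hne.2.1.symm,
    hne.2.2.symm] at this

lemma EvenTriangle.eq_of_adj_leaf
    (hev : EvenTriangle Γ.lineGraph ⟨s(w, a), ha⟩ ⟨s(w, b), hb⟩ ⟨s(w, c), hc⟩) {y : V}
    (hy : Γ.Adj a y) : y = w ∨ y = b ∨ y = c := by
  classical
  have hab : a ≠ b := by rintro rfl; exact hev.1.1.ne rfl
  have hac : a ≠ c := by rintro rfl; exact hev.1.2.2.ne rfl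
  by_contra! hne
  -- `ay` would meet only the edge `wa` of the star
  have := hev.2 ⟨s(a, y), hy⟩
  simp only [Set.ncard_sep_triple hev.1.1.ne hev.1.2.2.ne hev.1.2.1.ne,
    lineGraph_adj_mk_iff_xor] at this
  simp [Sym2.mem_iff, ha.ne, hab.symm, hac.symm, hne.1.symm, hne.2.1.symm, hne.2.2.symm] at this

lemma EvenTriangle.eq_of_preconnected (hconn : Γ.Preconnected)
    (hev : EvenTriangle Γ.lineGraph ⟨s(w, a), ha⟩ ⟨s(w, b), hb⟩ ⟨s(w, c), hc⟩) (v : V) :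
    v = w ∨ v = a ∨ v = b ∨ v = c := by
  refine hconn.mem_of_adj_closed (S := {w, a, b, c}) ?_ (Set.mem_insert w _) v
  rintro x y (rfl | rfl | rfl | rfl) hxy
  · rcases hev.eq_of_adj_center hxy with rfl | rfl | rfl <;> simp
  · rcases hev.eq_of_adj_leaf hxy with rfl | rfl | rfl <;> simp
  · rcases hev.swap.eq_of_adj_leaf hxy with rfl | rfl | rfl <;> simp
  · rcases hev.rotate.eq_of_adj_leaf hxy with rfl | rfl | rfl <;> simp

end EvenStar

instance : DecidableRel diamondGraph.Adj := inferInstanceAs (DecidableRel (fromRel _).Adj)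

instance : DecidableRel wheel4.Adj := inferInstanceAs (DecidableRel (fromRel _).Adj)

instance : DecidableRel octahedron.Adj := fun x y => inferInstanceAs (Decidable (x.1 ≠ y.1))

def clawWith (P₁ P₂ P₃ : Prop) : SimpleGraph (Fin 4) :=
  fromRel fun u v => u = 0 ∨ (P₁ ∧ u = 1 ∧ v = 2) ∨ (P₂ ∧ u = 1 ∧ v = 3) ∨ (P₃ ∧ u = 2 ∧ v = 3)

instance (P₁ P₂ P₃ : Prop) [Decidable P₁] [Decidable P₂] [Decidable P₃] :
    DecidableRel (clawWith P₁ P₂ P₃).Adj :=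
  inferInstanceAs (DecidableRel (fromRel _).Adj)

lemma eq_clawWith {H : SimpleGraph (Fin 4)} (h₁ : H.Adj 0 1) (h₂ : H.Adj 0 2) (h₃ : H.Adj 0 3) :
    H = clawWith (H.Adj 1 2) (H.Adj 1 3) (H.Adj 2 3) := by
  ext i j
  fin_cases i <;> fin_cases j <;> simp [clawWith, h₁, h₂, h₃, h₁.symm, h₂.symm, h₃.symm, H.adj_comm]

lemma clawWith_lineGraph_cases (P₁ P₂ P₃ : Prop) :
    Nonempty ((clawWith P₁ P₂ P₃).lineGraph ≃g diamondGraph) ∨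
      Nonempty ((clawWith P₁ P₂ P₃).lineGraph ≃g wheel4) ∨
      Nonempty ((clawWith P₁ P₂ P₃).lineGraph ≃g octahedron) ∨
      Nonempty ((clawWith P₁ P₂ P₃).lineGraph ≃g (⊤ : SimpleGraph (Fin 3))) := by
  rcases Classical.propComplete P₁ with rfl | rfl <;>
    rcases Classical.propComplete P₂ with rfl | rfl <;>
    rcases Classical.propComplete P₃ with rfl | rfl
  · refine .inr <| .inr <| .inl <| nonempty_iso_of_bijective
      (Function.uncurry (![![⟨s(0, 1), by decide⟩, ⟨s(2, 3), by decide⟩],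
        ![⟨s(0, 2), by decide⟩, ⟨s(1, 3), by decide⟩],
        ![⟨s(0, 3), by decide⟩, ⟨s(1, 2), by decide⟩]] :
        Fin 3 → Fin 2 → (clawWith True True True).edgeSet)) (by decide) (by decide)
  · exact .inr <| .inl <| nonempty_iso_of_bijective ![⟨s(0, 2), by decide⟩, ⟨s(1, 2), by decide⟩,
      ⟨s(1, 3), by decide⟩, ⟨s(0, 3), by decide⟩, ⟨s(0, 1), by decide⟩] (by decide) (by decide)
  · exact .inr <| .inl <| nonempty_iso_of_bijective ![⟨s(0, 1), by decide⟩, ⟨s(1, 2), by decide⟩,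
      ⟨s(2, 3), by decide⟩, ⟨s(0, 3), by decide⟩, ⟨s(0, 2), by decide⟩] (by decide) (by decide)
  · exact .inl <| nonempty_iso_of_bijective ![⟨s(0, 1), by decide⟩, ⟨s(0, 2), by decide⟩,
      ⟨s(0, 3), by decide⟩, ⟨s(1, 2), by decide⟩] (by decide) (by decide)
  · exact .inr <| .inl <| nonempty_iso_of_bijective ![⟨s(0, 1), by decide⟩, ⟨s(1, 3), by decide⟩,
      ⟨s(2, 3), by decide⟩, ⟨s(0, 2), by decide⟩, ⟨s(0, 3), by decide⟩] (by decide) (by decide)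
  · exact .inl <| nonempty_iso_of_bijective ![⟨s(0, 1), by decide⟩, ⟨s(0, 3), by decide⟩,
      ⟨s(0, 2), by decide⟩, ⟨s(1, 3), by decide⟩] (by decide) (by decide)
  · exact .inl <| nonempty_iso_of_bijective ![⟨s(0, 2), by decide⟩, ⟨s(0, 3), by decide⟩,
      ⟨s(0, 1), by decide⟩, ⟨s(2, 3), by decide⟩] (by decide) (by decide)
  · exact .inr <| .inr <| .inr <| nonempty_iso_of_bijective ![⟨s(0, 1), by decide⟩,
      ⟨s(0, 2), by decide⟩, ⟨s(0, 3), by decide⟩] (by decide) (by decide)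

lemma nonempty_lineGraph_top_fin_three_iso :
    Nonempty ((⊤ : SimpleGraph (Fin 3)).lineGraph ≃g (⊤ : SimpleGraph (Fin 3))) :=
  nonempty_iso_of_bijective ![⟨s(1, 2), by decide⟩, ⟨s(0, 2), by decide⟩, ⟨s(0, 1), by decide⟩]
    (by decide) (by decide)

lemma SimpleGraph.exists_iso_clawWith {V : Type} {Γ : SimpleGraph V} {w a b c : V}
    (hall : ∀ v, v = w ∨ v = a ∨ v = b ∨ v = c) (ha : Γ.Adj w a) (hb : Γ.Adj w b)
    (hc : Γ.Adj w c) (hab : a ≠ b) (hac : a ≠ c) (hbc : b ≠ c) :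
    ∃ P₁ P₂ P₃ : Prop, Nonempty (Γ ≃g clawWith P₁ P₂ P₃) := by
  have hinj : Function.Injective ![w, a, b, c] := by
    intro i j hij
    fin_cases i <;> fin_cases j <;>
      simp_all [ha.ne, hb.ne, hc.ne, ha.ne', hb.ne', hc.ne', hab.symm, hac.symm, hbc.symm]
  have hsurj : Function.Surjective ![w, a, b, c] := fun v => by
    rcases hall v with rfl | rfl | rfl | rfl
    exacts [⟨0, rfl⟩, ⟨1, rfl⟩, ⟨2, rfl⟩, ⟨3, rfl⟩]
  let e := Equiv.ofBijective _ ⟨hinj, hsurj⟩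
  refine ⟨(Γ.comap e).Adj 1 2, (Γ.comap e).Adj 1 3, (Γ.comap e).Adj 2 3, ?_⟩
  rw [← eq_clawWith (H := Γ.comap e) ha hb hc]
  exact ⟨(Iso.comap e Γ).symm⟩

lemma SimpleGraph.exists_iso_clawWith_of_evenTriangle {V : Type} {Γ : SimpleGraph V}
    (hconn : Γ.Preconnected) {w : V} {p q r : Γ.edgeSet} (hp : w ∈ (p : Sym2 V))
    (hq : w ∈ (q : Sym2 V)) (hr : w ∈ (r : Sym2 V)) (hev : EvenTriangle Γ.lineGraph p q r) :
    ∃ P₁ P₂ P₃ : Prop, Nonempty (Γ ≃g clawWith P₁ P₂ P₃) := by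
  obtain ⟨a, ha, rfl⟩ := exists_adj_eq_of_mem hp
  obtain ⟨b, hb, rfl⟩ := exists_adj_eq_of_mem hq
  obtain ⟨c, hc, rfl⟩ := exists_adj_eq_of_mem hr
  have hab : a ≠ b := by rintro rfl; exact hev.1.1.ne rfl
  have hac : a ≠ c := by rintro rfl; exact hev.1.2.2.ne rfl
  have hbc : b ≠ c := by rintro rfl; exact hev.1.2.1.ne rfl
  exact exists_iso_clawWith (hev.eq_of_preconnected hconn) ha hb hc hab hac hbc

section GainLine

variable {G : Type} [Group G] {s : G}

lemma IsGainLine.gain_eq_of_oddTriangle {VL : Type} (hs : s * s = 1)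
    (hsc : ∀ g : G, s * g = g * s) {L : SimpleGraph VL} {ζ : VL → VL → G}
    (h : IsGainLine s L ζ) {a b c : VL} (hT : OddTriangle L a b c) :
    ζ a b * ζ b c * ζ c a = s := by
  obtain ⟨V', Γ', φ, H, hH⟩ := h
  obtain ⟨w, ha, hb, hc⟩ := exists_mem_of_oddTriangle_lineGraph (hT.map φ)
  obtain ⟨⟨hab, hbc, hac⟩, -⟩ := hT
  have hζ := fun x y hx hy (hxy : L.Adj x y) =>
    hH (φ x) (φ y) w hx hy (φ.map_adj_iff.mpr hxy).ne
  simp only [RelIso.symm_apply_apply] at hζ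
  rw [hζ a b ha hb hab, hζ b c hb hc hbc, hζ c a hc ha hac.symm]
  exact mul_inv_mul_cyclic_eq hs hsc _ _ _

lemma exists_gPhase_of_star_gain {V : Type} {Γ : SimpleGraph V} (hs : s * s = 1)
    (hsc : ∀ g : G, s * g = g * s) {ζ : Γ.edgeSet → Γ.edgeSet → G}
    (hζ : IsGainFun Γ.lineGraph ζ)
    (hstar : ∀ (w : V) (p q r : Γ.edgeSet), w ∈ (p : Sym2 V) → w ∈ (q : Sym2 V) →
      w ∈ (r : Sym2 V) → p ≠ q → q ≠ r → p ≠ r → ζ p q * ζ q r * ζ r p = s) :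
    ∃ H : GPhase Γ G, PsiLEq s H ζ := by
  choose h hh using fun w : V => exists_potential_of_triangle_gain hs hsc
    (fun p q : {e : Γ.edgeSet // w ∈ (e : Sym2 V)} => ζ p q)
    (fun p q hpq => hζ (lineGraph_adj_of_mem p.2 q.2 (Subtype.coe_ne_coe.mpr hpq)))
    (fun p q r hpq hqr hpr => hstar w p q r p.2 q.2 r.2 (Subtype.coe_ne_coe.mpr hpq)
      (Subtype.coe_ne_coe.mpr hqr) (Subtype.coe_ne_coe.mpr hpr))
  exact ⟨fun w e he => h w ⟨e, he⟩, fun p q w hp hq hpq =>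
    hh w ⟨p, hp⟩ ⟨q, hq⟩ (Subtype.coe_ne_coe.mp hpq)⟩

lemma isGainLine_of_iso_top_fin_three {VL : Type} {L : SimpleGraph VL} (hs : s * s = 1)
    (hsc : ∀ g : G, s * g = g * s) {ζ : VL → VL → G} (hζ : IsGainFun L ζ)
    (φ : L ≃g (⊤ : SimpleGraph (Fin 3))) : IsGainLine s L ζ := by
  let ψ : L ≃g (⊤ : SimpleGraph (Fin 3)).lineGraph :=
    φ.trans (Classical.choice nonempty_lineGraph_top_fin_three_iso).symm
  have hstar : ∀ (w : Fin 3) (p q r : (⊤ : SimpleGraph (Fin 3)).edgeSet), w ∈ (p : Sym2 _) →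
      w ∈ (q : Sym2 _) → w ∈ (r : Sym2 _) → p = q ∨ q = r ∨ p = r := by
    decide
  obtain ⟨H, hH⟩ := exists_gPhase_of_star_gain hs hsc
    (fun p q hpq => hζ (ψ.symm.map_adj_iff.mpr hpq))
    fun w p q r hp hq hr hpq hqr hpr => by
      rcases hstar w p q r hp hq hr with h | h | h <;> contradiction
  exact ⟨Fin 3, ⊤, ψ, H, hH⟩

lemma isGainLine_of_iso_clawWith {V : Type} {Γ : SimpleGraph V} {P₁ P₂ P₃ : Prop}
    (ψ : Γ ≃g clawWith P₁ P₂ P₃) (hF₁ : ¬ Nonempty (Γ.lineGraph ≃g diamondGraph))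
    (hF₂ : ¬ Nonempty (Γ.lineGraph ≃g wheel4)) (hF₃ : ¬ Nonempty (Γ.lineGraph ≃g octahedron))
    (hs : s * s = 1) (hsc : ∀ g : G, s * g = g * s) {ζ : Γ.edgeSet → Γ.edgeSet → G}
    (hζ : IsGainFun Γ.lineGraph ζ) : IsGainLine s Γ.lineGraph ζ := by
  rcases clawWith_lineGraph_cases P₁ P₂ P₃ with ⟨⟨φ⟩⟩ | ⟨⟨φ⟩⟩ | ⟨⟨φ⟩⟩ | ⟨⟨φ⟩⟩
  · exact absurd ⟨ψ.lineGraph.trans φ⟩ hF₁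
  · exact absurd ⟨ψ.lineGraph.trans φ⟩ hF₂
  · exact absurd ⟨ψ.lineGraph.trans φ⟩ hF₃
  · exact isGainLine_of_iso_top_fin_three hs hsc hζ (ψ.lineGraph.trans φ)

end GainLine

theorem gainLine_iff_oddTriangles_general
    {V G : Type} [Group G] (Γ : SimpleGraph V) (hconn : Γ.Connected)
    (hF₁ : ¬ Nonempty (Γ.lineGraph ≃g diamondGraph))
    (hF₂ : ¬ Nonempty (Γ.lineGraph ≃g wheel4))
    (hF₃ : ¬ Nonempty (Γ.lineGraph ≃g octahedron))
    (s : G) (hs : s * s = 1) (hsc : ∀ g : G, s * g = g * s)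
    (ζ : Γ.edgeSet → Γ.edgeSet → G) (hζ : IsGainFun Γ.lineGraph ζ) :
    IsGainLine s Γ.lineGraph ζ ↔
      ∀ a b c : Γ.edgeSet, OddTriangle Γ.lineGraph a b c →
        ζ a b * ζ b c * ζ c a = s := by
  refine ⟨fun h a b c hT => h.gain_eq_of_oddTriangle hs hsc hT, fun hodd => ?_⟩
  by_cases hstar : ∀ (w : V) (p q r : Γ.edgeSet), w ∈ (p : Sym2 V) → w ∈ (q : Sym2 V) →
      w ∈ (r : Sym2 V) → p ≠ q → q ≠ r → p ≠ r → ζ p q * ζ q r * ζ r p = s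
  · obtain ⟨H, hH⟩ := exists_gPhase_of_star_gain hs hsc hζ hstar
    exact ⟨V, Γ, .refl, H, hH⟩
  push Not at hstar
  obtain ⟨w, p, q, r, hp, hq, hr, hpq, hqr, hpr, hgain⟩ := hstar
  have hT : IsTriangle Γ.lineGraph p q r :=
    ⟨lineGraph_adj_of_mem hp hq hpq, lineGraph_adj_of_mem hq hr hqr, lineGraph_adj_of_mem hp hr hpr⟩
  obtain ⟨P₁, P₂, P₃, ⟨ψ⟩⟩ := exists_iso_clawWith_of_evenTriangle hconn.preconnected hp hq hr
    (hT.evenTriangle_of_not_oddTriangle fun h => hgain (hodd p q r h))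
  exact isGainLine_of_iso_clawWith ψ hF₁ hF₂ hF₃ hs hsc hζ

/-- **Corollary 3.4.** If `L = L(Γ)` is a line graph not isomorphic to `F₁`, `F₂` or
`F₃`, then `(L, ζ)` is a gain-line graph if and only if every odd triangle of `L` has
gain `s`. -/
theorem gainLine_iff_oddTriangles
    {V G : Type} [Group G] [Fintype V] (Γ : SimpleGraph V) (hconn : Γ.Connected)
    (hF₁ : ¬ Nonempty (Γ.lineGraph ≃g diamondGraph))
    (hF₂ : ¬ Nonempty (Γ.lineGraph ≃g wheel4))
    (hF₃ : ¬ Nonempty (Γ.lineGraph ≃g octahedron))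
    (s : G) (hs : s * s = 1) (hsc : ∀ g : G, s * g = g * s)
    (ζ : Γ.edgeSet → Γ.edgeSet → G) (hζ : IsGainFun Γ.lineGraph ζ) :
    IsGainLine s Γ.lineGraph ζ ↔
      ∀ a b c : Γ.edgeSet, OddTriangle Γ.lineGraph a b c →
        ζ a b * ζ b c * ζ c a = s :=
  gainLine_iff_oddTriangles_general Γ hconn hF₁ hF₂ hF₃ s hs hsc ζ hζ
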